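/- arXiv:1107.1063 — 2 statements merged into one kernel-verified Lean document; each statement's English description precedes it below -/
import Mathlib

section
/- For all integers m and r with 0 ≤ r and 2r + 2 ≤ m, one has S(m,r) = T(m−1−r, r). -/
open Finset

/-- `S n r = ∑_{i=r+1}^{⌊n/2⌋} C(n,2i)·C(i−1,r)`. -/
def S (n r : ℕ) : ℕ := ∑ i ∈ Icc (r + 1) (n / 2), n.choose (2 * i) * (i - 1).choose r

/-- `T n r = ∑_{j=r+1}^{n} C(n,j)·C(j−1,r)`. -/
def T (n r : ℕ) : ℕ := ∑ j ∈ Icc (r + 1) n, n.choose j * (j - 1).choose r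

/-!
Put `N = m - 2r - 1`. Both `(N, r) ↦ S (N + 2r + 1) r` and `(N, r) ↦ T (N + r) r` vanish at `N = 0`
and satisfy `f (N+1) 0 = 2 f N 0 + 1` and `f (N+1) (r+1) = 2 f N (r+1) + f (N+1) r`, which
determines `f`. For `T` the recurrence is Pascal's rule applied once to `C(n+1, j)` and once to
`C(j, r+1)`; for `S`, Pascal's rule for `C(m+2, 2i)` passes through the companion sum
`∑ C(m, 2i+1) C(i, r)` over odd indices.
-/

-- The unique solution is `f N r = ∑_{k<N} C(k+r, r) 2^k`.
structure PascalDoubling (f : ℕ → ℕ → ℕ) : Prop where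
  zero_left : ∀ r, f 0 r = 0
  succ_zero : ∀ N, f (N + 1) 0 = 2 * f N 0 + 1
  succ_succ : ∀ N r, f (N + 1) (r + 1) = 2 * f N (r + 1) + f (N + 1) r

theorem PascalDoubling.unique {f g : ℕ → ℕ → ℕ} (hf : PascalDoubling f) (hg : PascalDoubling g) :
    f = g := by
  ext N r
  induction N generalizing r with
  | zero => rw [hf.zero_left, hg.zero_left]
  | succ N ihN =>
    induction r with
    | zero => rw [hf.succ_zero, hg.succ_zero, ihN]
    | succ r ihr => rw [hf.succ_succ, hg.succ_succ, ihN, ihr]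

theorem sum_Icc_mul_choose_pred_eq_sum_range {a b : ℕ} (r : ℕ) (g : ℕ → ℕ) (hab : b ≤ a)
    (hg : ∀ i, b < i → g i = 0) :
    ∑ i ∈ Icc (r + 1) b, g i * (i - 1).choose r = ∑ i ∈ range a, g (i + 1) * i.choose r := by
  calc ∑ i ∈ Icc (r + 1) b, g i * (i - 1).choose r
      = ∑ i ∈ Ico 1 (a + 1), g i * (i - 1).choose r := by
        refine sum_subset (fun i hi => ?_) (fun i hi hib => ?_)
        · simp only [mem_Icc, mem_Ico] at hi ⊢; omega
        · simp only [mem_Icc, mem_Ico, not_and_or, not_le] at hi hib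
          rcases hib with hi' | hi'
          · rw [Nat.choose_eq_zero_of_lt (by omega), mul_zero]
          · rw [hg i hi', zero_mul]
    _ = ∑ i ∈ range a, g (i + 1) * i.choose r := by
        rw [sum_Ico_eq_sum_range, Nat.add_sub_cancel]
        refine sum_congr rfl fun i _ => ?_
        rw [add_comm 1 i, Nat.add_sub_cancel]

theorem S_eq_sum_range (m r : ℕ) : S m r = ∑ i ∈ range m, m.choose (2 * i + 2) * i.choose r :=
  sum_Icc_mul_choose_pred_eq_sum_range r _ (Nat.div_le_self m 2)
    fun i hi => Nat.choose_eq_zero_of_lt (by omega)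

theorem T_eq_sum_range (n r : ℕ) : T n r = ∑ j ∈ range n, n.choose (j + 1) * j.choose r :=
  sum_Icc_mul_choose_pred_eq_sum_range r _ le_rfl fun _ hj => Nat.choose_eq_zero_of_lt hj

theorem sum_range_succ_choose_mul_of_lt {n N : ℕ} (k g : ℕ → ℕ) (hk : n < k N) :
    ∑ i ∈ range (N + 1), n.choose (k i) * g i = ∑ i ∈ range N, n.choose (k i) * g i := by
  rw [sum_range_succ, Nat.choose_eq_zero_of_lt hk, zero_mul, add_zero]

def oddS (m r : ℕ) : ℕ := ∑ i ∈ range m, m.choose (2 * i + 1) * i.choose r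

theorem S_succ (m r : ℕ) : S (m + 1) r = oddS m r + S m r := by
  rw [S_eq_sum_range, S_eq_sum_range,
    sum_range_succ_choose_mul_of_lt (fun i => 2 * i + 2) _ (by omega)]
  simp only [Nat.choose_succ_succ', add_mul, sum_add_distrib, oddS]

theorem oddS_succ (m r : ℕ) :
    oddS (m + 1) r = ∑ i ∈ range (m + 1), m.choose (2 * i) * i.choose r + oddS m r := by
  simp only [oddS, Nat.choose_succ_succ', add_mul, sum_add_distrib]
  rw [sum_range_succ_choose_mul_of_lt (fun i => 2 * i + 1) _ (by omega)]

theorem sum_range_choose_two_mul_mul_choose_succ (m r : ℕ) :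
    ∑ i ∈ range (m + 1), m.choose (2 * i) * i.choose (r + 1) = S m r + S m (r + 1) := by
  simp only [sum_range_succ', S_eq_sum_range, mul_add, mul_one, Nat.choose_succ_succ',
    sum_add_distrib]
  simp

theorem sum_range_choose_two_mul_mul_choose_zero (m : ℕ) :
    ∑ i ∈ range (m + 1), m.choose (2 * i) * i.choose 0 = S m 0 + 1 := by
  simp [sum_range_succ', S_eq_sum_range, mul_add]

theorem S_add_two_succ (m r : ℕ) : S (m + 2) (r + 1) = 2 * S (m + 1) (r + 1) + S m r := by
  rw [S_succ, oddS_succ, sum_range_choose_two_mul_mul_choose_succ, S_succ m]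
  ring

theorem S_add_two_zero (m : ℕ) : S (m + 2) 0 = 2 * S (m + 1) 0 + 1 := by
  rw [S_succ, oddS_succ, sum_range_choose_two_mul_mul_choose_zero, S_succ m]
  ring

theorem T_succ (n r : ℕ) : T (n + 1) r = ∑ k ∈ range (n + 1), n.choose k * k.choose r + T n r := by
  simp only [T_eq_sum_range, Nat.choose_succ_succ', add_mul, sum_add_distrib]
  rw [sum_range_succ_choose_mul_of_lt (fun j => j + 1) _ (by omega)]

theorem sum_range_choose_mul_choose_succ (n r : ℕ) :
    ∑ k ∈ range (n + 1), n.choose k * k.choose (r + 1) = T n r + T n (r + 1) := by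
  simp only [sum_range_succ', T_eq_sum_range, Nat.choose_succ_succ', mul_add, sum_add_distrib]
  simp

theorem sum_range_choose_mul_choose_zero (n : ℕ) :
    ∑ k ∈ range (n + 1), n.choose k * k.choose 0 = T n 0 + 1 := by
  simp [sum_range_succ', T_eq_sum_range]

theorem T_succ_succ (n r : ℕ) : T (n + 1) (r + 1) = 2 * T n (r + 1) + T n r := by
  rw [T_succ, sum_range_choose_mul_choose_succ]
  ring

theorem T_succ_zero (n : ℕ) : T (n + 1) 0 = 2 * T n 0 + 1 := by
  rw [T_succ, sum_range_choose_mul_choose_zero]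
  ring

theorem pascalDoubling_S : PascalDoubling fun N r => S (N + 2 * r + 1) r where
  zero_left r := sum_eq_zero fun i hi => by simp only [mem_Icc] at hi; omega
  succ_zero N := S_add_two_zero N
  succ_succ N r := by
    rw [show N + 1 + 2 * (r + 1) + 1 = N + 2 * r + 2 + 2 by ring, S_add_two_succ]
    ring_nf

theorem pascalDoubling_T : PascalDoubling fun N r => T (N + r) r where
  zero_left r := sum_eq_zero fun j hj => by simp only [mem_Icc] at hj; omega
  succ_zero N := T_succ_zero N
  succ_succ N r := by
    rw [show N + 1 + (r + 1) = N + r + 1 + 1 by ring, T_succ_succ]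
    ring_nf

theorem S_eq_T (m r : ℕ) (h : 2 * r + 2 ≤ m) : S m r = T (m - 1 - r) r := by
  obtain ⟨N, rfl⟩ : ∃ N, m = N + 2 * r + 1 := ⟨m - 2 * r - 1, by omega⟩
  have := congrFun (congrFun (pascalDoubling_S.unique pascalDoubling_T) N) r
  rwa [show N + 2 * r + 1 - 1 - r = N + r by omega]
end

section
/- For all integers n and r with 1 ≤ r ≤ n−1, one has U(n,r) = V(n,r). -/
open Finset

/-- `U n r = ∑_{j=r+1}^{n} C(j−1,r)·2^{j−1−r}`. -/
def U (n r : ℕ) : ℕ := ∑ j ∈ Icc (r + 1) n, (j - 1).choose r * 2 ^ (j - 1 - r)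

/-- `V n r = ∑_{j=1}^{n−r} C(n−1−j,r−1)·2^{n−r−j}·(2^j−1)`. -/
def V (n r : ℕ) : ℕ :=
  ∑ j ∈ Icc 1 (n - r), (n - 1 - j).choose (r - 1) * 2 ^ (n - r - j) * (2 ^ j - 1)

/-!
Both `U (m + 1) (s + 1)` and `V (m + 1) (s + 1)` equal `C(m, s + 1) · 2 ^ (m - s) - U m s`.
For `U` this follows by induction on `m` from Pascal's rule. For `V`, the reflection
`j ↦ m + 1 - j` turns its summands into those of `U m s` multiplied by `2 ^ (m + 1 - k) - 1`,
so adding `U m s` leaves `2 ^ (m - s) · ∑ C(k - 1, s)`, which is the hockey-stick identity.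
-/

lemma U_succ (n r : ℕ) : U (n + 1) r = U n r + n.choose r * 2 ^ (n - r) := by
  rcases le_or_gt r n with h | h
  · rw [U, sum_Icc_succ_top (by omega), ← U]
    rfl
  · rw [U, U, Icc_eq_empty (by omega), Icc_eq_empty (by omega), Nat.choose_eq_zero_of_lt h]
    simp

-- When `m < s` the truncated exponents disagree, but then the binomial coefficient vanishes.
lemma choose_succ_succ_mul_two_pow_succ_sub (m s : ℕ) :
    (m + 1).choose (s + 1) * 2 ^ (m + 1 - s) = 2 * ((m + 1).choose (s + 1) * 2 ^ (m - s)) := by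
  rcases le_or_gt s m with h | h
  · rw [Nat.sub_add_comm h, pow_succ]; ring
  · simp [Nat.choose_eq_zero_of_lt (by omega : m + 1 < s + 1)]

lemma U_succ_succ_add_U (m s : ℕ) :
    U (m + 1) (s + 1) + U m s = m.choose (s + 1) * 2 ^ (m - s) := by
  induction m with
  | zero => simp [U]
  | succ m ih =>
    rw [U_succ (m + 1) (s + 1), U_succ m s, Nat.add_sub_add_right,
      choose_succ_succ_mul_two_pow_succ_sub, add_add_add_comm, ih, Nat.choose_succ_succ' m s]
    ring

lemma V_succ_succ_eq_sum (m s : ℕ) :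
    V (m + 1) (s + 1) =
      ∑ k ∈ Icc (s + 1) m, (k - 1).choose s * 2 ^ (k - 1 - s) * (2 ^ (m + 1 - k) - 1) := by
  refine sum_nbij' (fun j ↦ m + 1 - j) (fun k ↦ m + 1 - k) ?_ ?_ ?_ ?_ fun j hj ↦ ?_
  iterate 4 intro j hj; simp only [mem_Icc] at hj ⊢; omega
  rw [mem_Icc] at hj
  rw [show m + 1 - 1 - j = m + 1 - j - 1 by omega, Nat.add_sub_cancel,
    show m + 1 - (s + 1) - j = m + 1 - j - 1 - s by omega, show m + 1 - (m + 1 - j) = j by omega]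

lemma sum_Icc_choose_pred (s m : ℕ) :
    ∑ k ∈ Icc (s + 1) m, (k - 1).choose s = m.choose (s + 1) := by
  cases m with
  | zero => simp
  | succ m => rw [← Nat.sum_Icc_choose, ← map_add_right_Icc s m 1, sum_map]; rfl

lemma V_succ_succ_add_U (m s : ℕ) :
    V (m + 1) (s + 1) + U m s = m.choose (s + 1) * 2 ^ (m - s) := by
  have hterm : ∀ k ∈ Icc (s + 1) m,
      (k - 1).choose s * 2 ^ (k - 1 - s) * (2 ^ (m + 1 - k) - 1) + (k - 1).choose s * 2 ^ (k - 1 - s)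
        = (k - 1).choose s * 2 ^ (m - s) := by
    intro k hk
    rw [mem_Icc] at hk
    rw [← mul_add_one, Nat.sub_add_cancel Nat.one_le_two_pow, mul_assoc, ← pow_add,
      show k - 1 - s + (m + 1 - k) = m - s by omega]
  rw [V_succ_succ_eq_sum, U, ← sum_add_distrib, sum_congr rfl hterm, ← sum_mul,
    sum_Icc_choose_pred]

theorem U_eq_V_general (n r : ℕ) (h1 : 1 ≤ r) : U n r = V n r := by
  obtain ⟨s, rfl⟩ : ∃ s, r = s + 1 := ⟨r - 1, by omega⟩
  cases n with
  | zero => simp [U, V]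
  | succ m =>
    exact Nat.add_right_cancel ((U_succ_succ_add_U m s).trans (V_succ_succ_add_U m s).symm)

theorem U_eq_V (n r : ℕ) (h1 : 1 ≤ r) (h2 : r + 1 ≤ n) : U n r = V n r :=
  U_eq_V_general n r h1
end
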